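/- With the setup of the previous statement, the cumulants satisfy |u_{2k}| ≤ ((2k)!/k)·4|Λ|·α₁(Λ)^(-2k) for all k ≥ 1, where |Λ| is the number of vertices and the zeros α_j(Λ) in [0,2π) number exactly 2|Λ| with the rest obtained by adding multiples of 2π. -/
import Mathlib


open Real Nat

theorem stmt_12 (N : ℕ) (hN : 0 < N) (a : Fin (2 * N) → ℝ)
    (hpos : ∀ m, 0 < a m) (hlt : ∀ m, a m < 2 * π)
    (a1 : ℝ) (hmin : ∀ m, a1 ≤ a m) (hmem : ∃ m, a m = a1)
    (u : ℕ → ℝ)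
    (hu : ∀ k : ℕ, 0 < k → u (2 * k) =
      (-1) ^ (k - 1) * (((2 * k)! : ℝ) / (k : ℝ)) *
        ∑' l : ℕ, ∑ m, 1 / (a m + 2 * l * π) ^ (2 * k)) :
    ∀ k : ℕ, 0 < k →
      |u (2 * k)| ≤ (((2 * k)! : ℝ) / (k : ℝ)) * (4 * N) * (1 / a1 ^ (2 * k)) := by
  intro k hk
  obtain ⟨m0, hm0⟩ := hmem
  have ha1 : 0 < a1 := hm0 ▸ hpos m0
  have ha1lt : a1 < 2 * π := hm0 ▸ hlt m0
  have hπ := Real.pi_pos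
  -- pointwise bound on each term
  have key : ∀ (l : ℕ) (m : Fin (2 * N)),
      1 / (a m + 2 * l * π) ^ (2 * k) ≤
        (1 / a1 ^ (2 * k)) * (1 / ((l : ℝ) + 1) ^ 2) := by
    intro l m
    have hbase : a1 * ((l : ℝ) + 1) ≤ a m + 2 * l * π := by
      have h1 : a1 * (l : ℝ) ≤ 2 * π * l := by
        apply mul_le_mul_of_nonneg_right ha1lt.le (by positivity)
      have := hmin m
      nlinarith
    have hbpos : 0 < a1 * ((l : ℝ) + 1) := by positivity
    have hpow : (a1 * ((l : ℝ) + 1)) ^ (2 * k) ≤ (a m + 2 * l * π) ^ (2 * k) :=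
      pow_le_pow_left₀ hbpos.le hbase _
    have h1 : 1 / (a m + 2 * l * π) ^ (2 * k) ≤ 1 / (a1 * ((l : ℝ) + 1)) ^ (2 * k) :=
      one_div_le_one_div_of_le (by positivity) hpow
    have h2 : ((l : ℝ) + 1) ^ 2 ≤ ((l : ℝ) + 1) ^ (2 * k) :=
 by
      apply pow_le_pow_right₀ _ (by omega)
      have : (0:ℝ) ≤ (l:ℝ) := l.cast_nonneg
      linarith
    have h3 : (1 : ℝ) / (a1 * ((l : ℝ) + 1)) ^ (2 * k) ≤
        (1 / a1 ^ (2 * k)) * (1 / ((l : ℝ) + 1) ^ 2) := by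
      rw [mul_pow, one_div_mul_one_div]
      apply one_div_le_one_div_of_le (by positivity)
      gcongr
    exact h1.trans h3
  -- Basel-type sum
  have hb : HasSum (fun l : ℕ => (1 : ℝ) / ((l : ℝ) + 1) ^ 2) (π ^ 2 / 6) := by
    have h0 := (hasSum_nat_add_iff' (f := fun n : ℕ => (1 : ℝ) / (n : ℝ) ^ 2) 1).mpr
      hasSum_zeta_two
    simpa using h0
  set S := ∑' l : ℕ, ∑ m, 1 / (a m + 2 * l * π) ^ (2 * k) with hS
  have hgsum : Summable (fun l : ℕ =>
      (2 * N : ℝ) * ((1 / a1 ^ (2 * k)) * (1 / ((l : ℝ) + 1) ^ 2))) :=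
    (hb.summable.mul_left _).mul_left _
  have hfle : ∀ l : ℕ, (∑ m, 1 / (a m + 2 * l * π) ^ (2 * k)) ≤
      (2 * N : ℝ) * ((1 / a1 ^ (2 * k)) * (1 / ((l : ℝ) + 1) ^ 2)) := by
    intro l
    calc (∑ m, 1 / (a m + 2 * l * π) ^ (2 * k))
        ≤ ∑ _m : Fin (2 * N), (1 / a1 ^ (2 * k)) * (1 / ((l : ℝ) + 1) ^ 2) :=
          Finset.sum_le_sum fun m _ => key l m
      _ = (2 * N : ℝ) * ((1 / a1 ^ (2 * k)) * (1 / ((l : ℝ) + 1) ^ 2)) := by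
          rw [Finset.sum_const, Finset.card_fin, nsmul_eq_mul]
          push_cast
          ring
  have hfnonneg : ∀ l : ℕ, 0 ≤ ∑ m, 1 / (a m + 2 * l * π) ^ (2 * k) := by
    intro l
    apply Finset.sum_nonneg
    intro m _
    have : 0 < a m + 2 * l * π := by have := hpos m; positivity
    positivity
  have hfsum : Summable fun l : ℕ => ∑ m, 1 / (a m + 2 * l * π) ^ (2 * k) :=
    Summable.of_nonneg_of_le hfnonneg hfle hgsum
  have hSle : S ≤ (2 * N : ℝ) * ((1 / a1 ^ (2 * k)) * (π ^ 2 / 6)) := by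
    have := Summable.tsum_le_tsum hfle hfsum hgsum
    calc S ≤ ∑' l : ℕ, (2 * N : ℝ) * ((1 / a1 ^ (2 * k)) * (1 / ((l : ℝ) + 1) ^ 2)) :=
          this
      _ = (2 * N : ℝ) * ((1 / a1 ^ (2 * k)) * (π ^ 2 / 6)) := by
          rw [tsum_mul_left, tsum_mul_left, hb.tsum_eq]
  have hSnonneg : 0 ≤ S := tsum_nonneg hfnonneg
  have hπ2 : π ^ 2 / 6 ≤ 2 := by nlinarith [Real.pi_lt_d2]
  rw [hu k hk, abs_mul, abs_mul, abs_pow, abs_neg, abs_one, one_pow, one_mul,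
    abs_of_nonneg (by positivity : (0:ℝ) ≤ ((2 * k)! : ℝ) / (k : ℝ)),
    abs_of_nonneg hSnonneg]
  rw [mul_assoc]
  apply mul_le_mul_of_nonneg_left _ (by positivity)
  calc S ≤ (2 * N : ℝ) * ((1 / a1 ^ (2 * k)) * (π ^ 2 / 6)) := hSle
    _ ≤ (2 * N : ℝ) * ((1 / a1 ^ (2 * k)) * 2) := by
        have hN' : (0:ℝ) < N := by exact_mod_cast hN
        gcongr
    _ = 4 * N * (1 / a1 ^ (2 * k)) := by ring
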